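/- Suppose the error function E(x; w) satisfies, for all weights, ∂E/∂w_{l,i,j}(x; w) = Σ_{o=1}^{m} ε_o(x; w) · ∂f^[L]_o/∂w_{l,i,j}(x; w), where ε_o(x; w) are given functions. Then for all 1 ≤ l ≤ L, 1 ≤ i ≤ h_l, and 0 ≤ j ≤ h_{l-1}, the partial derivative of E with respect to the weight w_{l,i,j} equals δ_{l,i} if j = 0, and equals δ_{l,i} · z_{l-1,j} if 1 ≤ j ≤ h_{l-1}, where δ_{l,i} is the error coefficient of node (l,i). -/

import Mathlib

open Finset

/-- Output of node `i` of layer `l` (layer 0 is the input layer: `fnet 0 i = x i`).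
`h l` is the width of layer `l`, `φ l` the activation of layer `l`,
`w (l, i, j)` the weight from node `j` of layer `l-1` to node `i` of layer `l`
(`j = 0` being the bias). -/
noncomputable def fnet (h : ℕ → ℕ) (φ : ℕ → ℝ → ℝ) (x : ℕ → ℝ)
    (w : ℕ × ℕ × ℕ → ℝ) : ℕ → ℕ → ℝ
  | 0, i => x i
  | (l + 1), i =>
      φ (l + 1) (w (l + 1, i, 0) +
        ∑ j ∈ Finset.Icc 1 (h l), w (l + 1, i, j) * fnet h φ x w l j)

/-- Pre-activation (weighted sum) `u_{l,i} = g^[l]_i (x; w)` of node `i` of layer `l ≥ 1`. -/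
noncomputable def gnet (h : ℕ → ℕ) (φ : ℕ → ℝ → ℝ) (x : ℕ → ℝ)
    (w : ℕ × ℕ × ℕ → ℝ) (l i : ℕ) : ℝ :=
  w (l, i, 0) + ∑ j ∈ Finset.Icc 1 (h (l - 1)), w (l, i, j) * fnet h φ x w (l - 1) j

/-- Derivative amplification coefficient `a_{l,i → r,t}` from node `(l,i)` to node `(r,t)`
(for `l ≤ r`): `a_{l,i → l,t} = 1` if `i = t` and `0` otherwise, and for `l < r`,
`a_{l,i → r,t} = ∑_{j=1}^{h (r-1)} w_{r,t,j} * φ'_{r-1}(u_{r-1,j}) * a_{l,i → r-1,j}`. -/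
noncomputable def dac (h : ℕ → ℕ) (φ : ℕ → ℝ → ℝ) (x : ℕ → ℝ)
    (w : ℕ × ℕ × ℕ → ℝ) (l i : ℕ) : ℕ → ℕ → ℝ
  | 0, t => if i = t then 1 else 0
  | (r + 1), t =>
      if r + 1 ≤ l then (if i = t then 1 else 0)
      else ∑ j ∈ Finset.Icc 1 (h r),
        w (r + 1, t, j) * deriv (φ r) (gnet h φ x w r j) * dac h φ x w l i r j

lemma fnet_update_lt (h : ℕ → ℕ) (φ : ℕ → ℝ → ℝ) (x : ℕ → ℝ) (w : ℕ × ℕ × ℕ → ℝ)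
    (l i j : ℕ) (t : ℝ) :
    ∀ r, r < l → ∀ s,
      fnet h φ x (Function.update w (l, i, j) t) r s = fnet h φ x w r s := by
  intro r
  induction r with
  | zero => intro _ s; rfl
  | succ r ih =>
      intro hr s
      simp only [fnet]
      congr 1
      rw [Function.update_of_ne (by simp only [ne_eq, Prod.mk.injEq, not_and]; omega)]
      congr 1
      apply Finset.sum_congr rfl
      intro j' _
      rw [Function.update_of_ne (by simp only [ne_eq, Prod.mk.injEq, not_and]; omega),
        ih (by omega)]

lemma differentiable_update (w : ℕ × ℕ × ℕ → ℝ) (k a : ℕ × ℕ × ℕ) :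
    Differentiable ℝ (fun t : ℝ => Function.update w k t a) := by
  rcases eq_or_ne a k with rfl | hne
  · simp only [Function.update_self]; exact differentiable_id
  · simp only [Function.update_of_ne hne]
    exact differentiable_const _

lemma hasDerivAt_update' (w : ℕ × ℕ × ℕ → ℝ) (k a : ℕ × ℕ × ℕ) (t₀ : ℝ) :
    HasDerivAt (fun t : ℝ => Function.update w k t a) (if a = k then 1 else 0) t₀ := by
  rcases eq_or_ne a k with rfl | hne
  · simpa using hasDerivAt_id' t₀
  · simp only [Function.update_of_ne hne, if_neg hne]
    exact hasDerivAt_const t₀ _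

lemma fnet_update_diff (h : ℕ → ℕ) (φ : ℕ → ℝ → ℝ) (x : ℕ → ℝ) (w : ℕ × ℕ × ℕ → ℝ)
    (hφ : ∀ l, Differentiable ℝ (φ l)) (k : ℕ × ℕ × ℕ) :
    ∀ r s, Differentiable ℝ (fun t : ℝ => fnet h φ x (Function.update w k t) r s) := by
  intro r
  induction r with
  | zero => intro s; simp only [fnet]; exact differentiable_const _
  | succ r ih =>
      intro s
      simp only [fnet]
      apply (hφ (r + 1)).comp
      exact (differentiable_update w k _).add
        (Differentiable.fun_sum fun j' _ => (differentiable_update w k _).mul (ih j'))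

lemma fnet_update_deriv (h : ℕ → ℕ) (φ : ℕ → ℝ → ℝ) (x : ℕ → ℝ) (w : ℕ × ℕ × ℕ → ℝ)
    (hφ : ∀ l, Differentiable ℝ (φ l)) (l i j : ℕ)
    (hl : 1 ≤ l) (hj : j ≤ h (l - 1)) :
    ∀ r, l ≤ r → ∀ s,
      deriv (fun t : ℝ => fnet h φ x (Function.update w (l, i, j) t) r s) (w (l, i, j))
        = deriv (φ r) (gnet h φ x w r s) * (dac h φ x w l i r s *
          (if j = 0 then 1 else fnet h φ x w (l - 1) j)) := by
  intro r
  induction r with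
  | zero => intro hr; omega
  | succ r ih =>
      intro hr s
      set k : ℕ × ℕ × ℕ := (l, i, j) with hk
      set G : ℝ → ℝ := fun t => Function.update w k t (r + 1, s, 0) +
        ∑ j' ∈ Finset.Icc 1 (h r),
          Function.update w k t (r + 1, s, j') *
            fnet h φ x (Function.update w k t) r j' with hG
      have hGval : G (w k) = gnet h φ x w (r + 1) s := by
        simp [hG, gnet, Function.update_eq_self]
      set d : ℕ → ℝ := fun j' =>
        deriv (fun t : ℝ => fnet h φ x (Function.update w k t) r j') (w k) with hd
      have hGder : HasDerivAt G
          ((if ((r + 1 : ℕ), s, (0 : ℕ)) = k then (1 : ℝ) else 0) +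
            ∑ j' ∈ Finset.Icc 1 (h r),
              ((if ((r + 1 : ℕ), s, j') = k then (1 : ℝ) else 0) * fnet h φ x w r j'
                + w (r + 1, s, j') * d j')) (w k) := by
        apply HasDerivAt.add
        · exact hasDerivAt_update' w k _ (w k)
        · apply HasDerivAt.fun_sum
          intro j' _
          have := (hasDerivAt_update' w k (r + 1, s, j') (w k)).fun_mul
            ((fnet_update_diff h φ x w hφ k r j') (w k)).hasDerivAt
          simpa [Function.update_eq_self] using this
      have hfun : (fun t : ℝ => fnet h φ x (Function.update w k t) (r + 1) s)
          = (φ (r + 1)) ∘ G := by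
        funext t; simp only [fnet, Function.comp_apply, hG]
      rw [hfun, (((hφ (r + 1)) (G (w k))).hasDerivAt.comp (w k) hGder).deriv, hGval]
      congr 1
      rcases Nat.lt_or_ge r l with hrl | hrl
      · -- base case: l = r + 1
        have hl' : l = r + 1 := by omega
        subst hl'
        have hd0 : ∀ j', d j' = 0 := by
          intro j'
          have heq : (fun t : ℝ => fnet h φ x (Function.update w k t) r j')
              = fun _ => fnet h φ x w r j' :=
            funext fun t => fnet_update_lt h φ x w (r + 1) i j t r (by omega) j'
          simp only [hd]
          rw [heq, deriv_const]
        have hdac : dac h φ x w (r + 1) i (r + 1) s = if i = s then 1 else 0 := by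
          simp [dac]
        rw [hdac]
        rcases eq_or_ne s i with rfl | hsi
        · rcases Nat.eq_zero_or_pos j with rfl | hj1
          · simp only [hd0, mul_zero, add_zero, if_pos rfl]
            rw [Finset.sum_eq_zero]
            · norm_num [hk]
            · intro j' hj'
              rw [if_neg, zero_mul]
              simp only [hk, Prod.mk.injEq]
              simp at hj'
              omega
          · have hjmem : j ∈ Finset.Icc 1 (h r) := by
              simp only [Nat.add_sub_cancel] at hj
              simp [Finset.mem_Icc]; omega
            rw [if_neg (by simp [hk]; omega)]
            simp only [hd0, mul_zero, add_zero, zero_add]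
            have : ∀ j' ∈ Finset.Icc 1 (h r),
                (if ((r + 1 : ℕ), s, j') = k then (1 : ℝ) else 0) * fnet h φ x w r j'
                = if j' = j then fnet h φ x w r j' else 0 := by
              intro j' _
              by_cases hjj : j' = j
              · subst hjj; simp [hk]
              · rw [if_neg (by simp [hk]; omega), if_neg hjj, zero_mul]
            rw [Finset.sum_congr rfl this, Finset.sum_ite_eq' _ j, if_pos hjmem]
            simp [show j ≠ 0 by omega]
        · have hne2 : ∀ b : ℕ, ((r + 1 : ℕ), s, b) ≠ k := by
            intro b hb
            rw [hk, Prod.ext_iff, Prod.ext_iff] at hb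
            exact hsi hb.2.1
          rw [if_neg (hne2 0), Finset.sum_eq_zero, if_neg (Ne.symm hsi)]
          · simp
          · intro j' _
            simp [hne2 j', hd0]
      · -- step case: l ≤ r
        have hne : ∀ a b : ℕ, ((r + 1 : ℕ), a, b) ≠ k := by
          intro a b; simp [hk]; omega
        rw [if_neg (hne s 0), zero_add]
        have hdac : dac h φ x w l i (r + 1) s
            = ∑ j' ∈ Finset.Icc 1 (h r),
                w (r + 1, s, j') * deriv (φ r) (gnet h φ x w r j')
                  * dac h φ x w l i r j' := by
          simp only [dac, if_neg (by omega : ¬ r + 1 ≤ l)]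
        rw [hdac, Finset.sum_mul]
        apply Finset.sum_congr rfl
        intro j' _
        rw [if_neg (hne s j'), zero_mul, zero_add]
        simp only [hd]
        rw [ih hrl j']
        ring

/-- Partial derivative of a function `F` of the weight vector with respect to
the single weight `w_{l,i,j}`, evaluated at the weight vector `w`. -/
noncomputable def pderiv (F : (ℕ × ℕ × ℕ → ℝ) → ℝ) (w : ℕ × ℕ × ℕ → ℝ)
    (l i j : ℕ) : ℝ :=
  deriv (fun t : ℝ => F (Function.update w (l, i, j) t)) (w (l, i, j))

/-- Error coefficient `δ_{l,i} = ∑_{o=1}^m ε_o * φ'_L(u_{L,o}) * a_{l,i → L,o}`,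
where `ε o` is the value `ε_o (x; w)`. -/
noncomputable def ec (h : ℕ → ℕ) (φ : ℕ → ℝ → ℝ) (x : ℕ → ℝ)
    (w : ℕ × ℕ × ℕ → ℝ) (L m : ℕ) (ε : ℕ → ℝ) (l i : ℕ) : ℝ :=
  ∑ o ∈ Finset.Icc 1 m, ε o * deriv (φ L) (gnet h φ x w L o) * dac h φ x w l i L o

/-- Theorem 4: if the error `E` satisfies
`∂E/∂w_{l,i,j} (x; w) = ∑_{o=1}^m ε_o (x; w) * ∂f^[L]_o/∂w_{l,i,j} (x; w)` for all weights,
then `∂E/∂w_{l,i,j} (x; w)` equals the error coefficient `δ_{l,i}` if `j = 0`,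
and `δ_{l,i} * z_{l-1,j}` if `1 ≤ j ≤ h (l-1)`. -/
theorem pderiv_error_eq_ec
    (L n m : ℕ) (h : ℕ → ℕ) (hn : h 0 = n) (hm : h L = m)
    (φ : ℕ → ℝ → ℝ) (hφ : ∀ l, Differentiable ℝ (φ l))
    (x : ℕ → ℝ) (w : ℕ × ℕ × ℕ → ℝ)
    (E : (ℕ → ℝ) → (ℕ × ℕ × ℕ → ℝ) → ℝ) (ε : ℕ → ℝ)
    (hE : ∀ l i j : ℕ, 1 ≤ l → l ≤ L → 1 ≤ i → i ≤ h l → j ≤ h (l - 1) →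
      pderiv (fun w' => E x w') w l i j
        = ∑ o ∈ Finset.Icc 1 m, ε o * pderiv (fun w' => fnet h φ x w' L o) w l i j)
    (l i j : ℕ)
    (hl : 1 ≤ l) (hlL : l ≤ L)
    (hi1 : 1 ≤ i) (hi2 : i ≤ h l)
    (hj : j ≤ h (l - 1)) :
    pderiv (fun w' => E x w') w l i j
      = if j = 0 then ec h φ x w L m ε l i
        else ec h φ x w L m ε l i * fnet h φ x w (l - 1) j := by
  have key := fnet_update_deriv h φ x w hφ l i j hl hj L hlL
  rw [hE l i j hl hlL hi1 hi2 hj]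
  have hsum : ∑ o ∈ Finset.Icc 1 m, ε o * pderiv (fun w' => fnet h φ x w' L o) w l i j
      = ec h φ x w L m ε l i * (if j = 0 then 1 else fnet h φ x w (l - 1) j) := by
    rw [ec, Finset.sum_mul]
    apply Finset.sum_congr rfl
    intro o _
    simp only [pderiv]
    rw [key o]
    ring
  rw [hsum]
  by_cases hj0 : j = 0 <;> simp [hj0]
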